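/- arXiv:1810.00337 — 3 statements merged into one kernel-verified Lean document; each statement's English description precedes it below -/
import Mathlib

section
/- Let S and A be nonempty finite types, p : S → A → PMF S a transition kernel, r : S → A → ℝ a reward function, and γ ∈ [0,1) a discount factor. Define the Bellman optimality operator T : (S → ℝ) → (S → ℝ) by (T V)(s) = max over a ∈ A of (r(s,a) + γ · ∑_{s'} p(s'∣s,a) · V(s')). Then T is Lipschitz with constant γ with respect to the supremum norm on S → ℝ; i.e., for all V, W : S → ℝ, ‖T V − T W‖_∞ ≤ γ · ‖V − W‖_∞. -/
/-- The Bellman optimality operator of a finite MDP: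
`(T V)(s) = max_{a ∈ A} (r s a + γ * ∑ s', p(s'|s,a) * V s')`. -/
noncomputable def bellmanOpt {S A : Type*} [Fintype S] [Fintype A] [Nonempty A]
    (p : S → A → PMF S) (r : S → A → ℝ) (γ : ℝ) (V : S → ℝ) : S → ℝ :=
  fun s => Finset.univ.sup' Finset.univ_nonempty
    (fun a : A => r s a + γ * ∑ s' : S, (p s a s').toReal * V s')

/-!
Each action value `r s a + γ * 𝔼_{p(·|s,a)} V` moves by at most `γ ‖V - W‖` when `V` is replaced
by `W`, because an expectation moves by at most the sup-norm distance; a finite maximum of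
functions that each move by at most `c` moves by at most `c` as well.
-/

theorem Finset.abs_sup'_sub_sup'_le {ι α : Type*} [AddCommGroup α] [LinearOrder α]
    [IsOrderedAddMonoid α] {s : Finset ι} (hs : s.Nonempty) {f g : ι → α} {c : α}
    (h : ∀ i ∈ s, |f i - g i| ≤ c) : |s.sup' hs f - s.sup' hs g| ≤ c := by
  have sup'_le_sup'_add : ∀ f g : ι → α, (∀ i ∈ s, f i - g i ≤ c) →
      s.sup' hs f ≤ s.sup' hs g + c := fun f g hfg => by
    rw [sup'_add]
    exact sup'_mono_fun fun i hi => sub_le_iff_le_add'.1 (hfg i hi)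
  rw [abs_sub_le_iff, sub_le_iff_le_add', sub_le_iff_le_add']
  exact ⟨sup'_le_sup'_add f g fun i hi => (abs_sub_le_iff.1 (h i hi)).1,
    sup'_le_sup'_add g f fun i hi => (abs_sub_le_iff.1 (h i hi)).2⟩

theorem PMF.sum_toReal_eq_one {S : Type*} [Fintype S] (q : PMF S) :
    ∑ s, (q s).toReal = 1 := by
  rw [← ENNReal.toReal_sum fun s _ => q.apply_ne_top s, ← tsum_fintype (L := .unconditional S),
    q.tsum_coe, ENNReal.toReal_one]

theorem PMF.abs_sum_toReal_mul_sub_le {S : Type*} [Fintype S] (q : PMF S) (V W : S → ℝ) :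
    |∑ s, (q s).toReal * V s - ∑ s, (q s).toReal * W s| ≤ ‖V - W‖ :=
  calc |∑ s, (q s).toReal * V s - ∑ s, (q s).toReal * W s|
      = |∑ s, (q s).toReal * (V - W) s| := by
        simp only [Pi.sub_apply, mul_sub, Finset.sum_sub_distrib]
    _ ≤ ∑ s, (q s).toReal * ‖V - W‖ := by
        refine (Finset.abs_sum_le_sum_abs _ _).trans (Finset.sum_le_sum fun s _ => ?_)
        rw [abs_mul, ENNReal.abs_toReal]
        gcongr
        exact norm_le_pi_norm (V - W) s
    _ = ‖V - W‖ := by rw [← Finset.sum_mul, q.sum_toReal_eq_one, one_mul]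

theorem bellmanOpt_lipschitz_general {S A : Type*} [Fintype S] [Fintype A]
    [Nonempty A]
    (p : S → A → PMF S) (r : S → A → ℝ) (γ : ℝ) (hγ0 : 0 ≤ γ) :
    ∀ V W : S → ℝ,
      ‖bellmanOpt p r γ V - bellmanOpt p r γ W‖ ≤ γ * ‖V - W‖ := by
  intro V W
  refine (pi_norm_le_iff_of_nonneg (by positivity)).2 fun s => ?_
  rw [Pi.sub_apply, Real.norm_eq_abs]
  refine Finset.abs_sup'_sub_sup'_le _ fun a _ => ?_
  rw [add_sub_add_left_eq_sub, ← mul_sub, abs_mul, abs_of_nonneg hγ0]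
  gcongr
  exact (p s a).abs_sum_toReal_mul_sub_le V W

/-- The Bellman optimality operator is a `γ`-Lipschitz map in the sup norm. -/
theorem bellmanOpt_lipschitz {S A : Type*} [Fintype S] [Fintype A]
    [Nonempty S] [Nonempty A]
    (p : S → A → PMF S) (r : S → A → ℝ) (γ : ℝ) (hγ0 : 0 ≤ γ) (hγ1 : γ < 1) :
    ∀ V W : S → ℝ,
      ‖bellmanOpt p r γ V - bellmanOpt p r γ W‖ ≤ γ * ‖V - W‖ :=
  bellmanOpt_lipschitz_general p r γ hγ0
end

section
/- Let S and A be nonempty finite types, p : S → A → PMF S, r : S → A → ℝ, and γ ∈ [0,1). Then the Bellman optimality operator T, defined by (T V)(s) = max over a ∈ A of (r(s,a) + γ · ∑_{s'} p(s'∣s,a) · V(s')), has exactly one fixed point V* : S → ℝ satisfying T V* = V*. -/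
namespace Finset

variable {ι α : Type*} [AddCommGroup α] [LinearOrder α] [IsOrderedAddMonoid α]
  {s : Finset ι} (hs : s.Nonempty) {f g : ι → α} {c : α}

theorem sup'_le_sup'_add_of_le_add (h : ∀ i ∈ s, f i ≤ g i + c) :
    s.sup' hs f ≤ s.sup' hs g + c := by
  rw [sup'_add]
  exact sup'_mono_fun h

theorem abs_sup'_sub_sup'_le_s1 (h : ∀ i ∈ s, |f i - g i| ≤ c) :
    |s.sup' hs f - s.sup' hs g| ≤ c := by
  rw [abs_sub_le_iff, sub_le_iff_le_add', sub_le_iff_le_add']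
  exact ⟨sup'_le_sup'_add_of_le_add hs fun i hi =>
      sub_le_iff_le_add'.mp (abs_sub_le_iff.mp (h i hi)).1,
    sup'_le_sup'_add_of_le_add hs fun i hi =>
      sub_le_iff_le_add'.mp (abs_sub_le_iff.mp (h i hi)).2⟩

end Finset

namespace PMF

variable {S : Type*} [Fintype S]

theorem sum_toReal_eq_one_s1 (q : PMF S) : ∑ s, (q s).toReal = 1 := by
  rw [← ENNReal.toReal_sum fun s _ => q.apply_ne_top s, ← tsum_fintype (L := .unconditional _),
    q.tsum_coe, ENNReal.toReal_one]

theorem abs_sum_toReal_mul_sub_le_dist (q : PMF S) (V W : S → ℝ) :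
    |∑ s, (q s).toReal * V s - ∑ s, (q s).toReal * W s| ≤ dist V W :=
  calc |∑ s, (q s).toReal * V s - ∑ s, (q s).toReal * W s|
      = |∑ s, (q s).toReal * (V s - W s)| := by
        simp only [mul_sub, Finset.sum_sub_distrib]
    _ ≤ ∑ s, |(q s).toReal * (V s - W s)| := Finset.abs_sum_le_sum_abs _ _
    _ ≤ ∑ s, (q s).toReal * dist V W := by
        gcongr with s
        rw [abs_mul, ENNReal.abs_toReal, ← Real.dist_eq]
        gcongr
        exact dist_le_pi_dist V W s
    _ = dist V W := by rw [← Finset.sum_mul, q.sum_toReal_eq_one_s1, one_mul]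

end PMF

section Bellman

variable {S A : Type*} [Fintype S] [Fintype A] [Nonempty A]
  (p : S → A → PMF S) (r : S → A → ℝ) {γ : ℝ}

theorem dist_bellmanOpt_le (hγ : 0 ≤ γ) (V W : S → ℝ) :
    dist (bellmanOpt p r γ V) (bellmanOpt p r γ W) ≤ γ * dist V W := by
  refine (dist_pi_le_iff (by positivity)).mpr fun s => ?_
  refine Finset.abs_sup'_sub_sup'_le_s1 _ fun a _ => ?_
  rw [add_sub_add_left_eq_sub, ← mul_sub, abs_mul, abs_of_nonneg hγ]
  exact mul_le_mul_of_nonneg_left ((p s a).abs_sum_toReal_mul_sub_le_dist V W) hγ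

theorem bellmanOpt_contractingWith (hγ0 : 0 ≤ γ) (hγ1 : γ < 1) :
    ContractingWith ⟨γ, hγ0⟩ (bellmanOpt p r γ) :=
  ⟨by exact_mod_cast hγ1, LipschitzWith.of_dist_le_mul (dist_bellmanOpt_le p r hγ0)⟩

end Bellman

theorem bellmanOpt_existsUnique_fixedPoint_general {S A : Type*} [Fintype S] [Fintype A]
    [Nonempty A]
    (p : S → A → PMF S) (r : S → A → ℝ) (γ : ℝ) (hγ0 : 0 ≤ γ) (hγ1 : γ < 1) :
    ∃! Vstar : S → ℝ, bellmanOpt p r γ Vstar = Vstar := by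
  have hT := bellmanOpt_contractingWith p r hγ0 hγ1
  exact ⟨hT.fixedPoint, hT.fixedPoint_isFixedPt, fun _ hV => hT.fixedPoint_unique hV⟩

/-- The Bellman optimality operator has exactly one fixed point. -/
theorem bellmanOpt_existsUnique_fixedPoint {S A : Type*} [Fintype S] [Fintype A]
    [Nonempty S] [Nonempty A]
    (p : S → A → PMF S) (r : S → A → ℝ) (γ : ℝ) (hγ0 : 0 ≤ γ) (hγ1 : γ < 1) :
    ∃! Vstar : S → ℝ, bellmanOpt p r γ Vstar = Vstar :=
  bellmanOpt_existsUnique_fixedPoint_general p r γ hγ0 hγ1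
end

section
/- Let S and A be nonempty finite types, p : S → A → PMF S, r : S → A → ℝ, γ ∈ [0,1), V* the unique fixed point of the Bellman optimality operator T, and π : S → A any stationary deterministic policy with value function V^π (the unique fixed point of the policy evaluation operator T^π). Then V^π(s) ≤ V*(s) for every s ∈ S. -/
/-- The policy evaluation operator for a stationary deterministic policy `π`. -/
noncomputable def polEval {S A : Type*} [Fintype S]
    (p : S → A → PMF S) (r : S → A → ℝ) (γ : ℝ) (π : S → A) (V : S → ℝ) : S → ℝ :=
  fun s => r s (π s) + γ * ∑ s' : S, (p s (π s) s').toReal * V s'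

lemma sum_pmf_toReal {S : Type*} [Fintype S] (q : PMF S) :
    ∑ s' : S, (q s').toReal = 1 := by
  rw [← ENNReal.toReal_sum (fun _ _ => PMF.apply_ne_top _ _)]
  have h := q.tsum_coe
  rw [tsum_fintype] at h
  simp [h]

/-- The value of any stationary deterministic policy is bounded above by the
optimal value function. -/
theorem value_le_optimal {S A : Type*} [Fintype S] [Fintype A]
    [Nonempty S] [Nonempty A]
    (p : S → A → PMF S) (r : S → A → ℝ) (γ : ℝ) (hγ0 : 0 ≤ γ) (hγ1 : γ < 1)
    (Vstar : S → ℝ) (hVstar : bellmanOpt p r γ Vstar = Vstar)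
    (π : S → A) (Vπ : S → ℝ) (hVπ : polEval p r γ π Vπ = Vπ) :
    ∀ s, Vπ s ≤ Vstar s := by
  set M : ℝ := Finset.univ.sup' Finset.univ_nonempty (fun s => Vπ s - Vstar s) with hMdef
  have hle : ∀ s, Vπ s - Vstar s ≤ M := by
    intro s
    rw [hMdef]
    exact Finset.le_sup' (fun t => Vπ t - Vstar t) (Finset.mem_univ s)
  have key : ∀ s, Vπ s - Vstar s ≤ γ * M := by
    intro s
    have h1 : Vπ s = r s (π s) + γ * ∑ s' : S, (p s (π s) s').toReal * Vπ s' :=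
      (congrFun hVπ s).symm
    have h2 : r s (π s) + γ * ∑ s' : S, (p s (π s) s').toReal * Vstar s' ≤ Vstar s := by
      conv_rhs => rw [← congrFun hVstar s]
      unfold bellmanOpt
      exact Finset.le_sup' (fun a => r s a + γ * ∑ s' : S, (p s a s').toReal * Vstar s')
        (Finset.mem_univ (π s))
    have h3 : ∑ s' : S, (p s (π s) s').toReal * Vπ s'
        - ∑ s' : S, (p s (π s) s').toReal * Vstar s' ≤ M := by
      rw [← Finset.sum_sub_distrib]
      have : ∑ s' : S, ((p s (π s) s').toReal * Vπ s' - (p s (π s) s').toReal * Vstar s')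
          ≤ ∑ s' : S, (p s (π s) s').toReal * M := by
        apply Finset.sum_le_sum
        intro i _
        rw [← mul_sub]
        exact mul_le_mul_of_nonneg_left (hle i) ENNReal.toReal_nonneg
      calc _ ≤ ∑ s' : S, (p s (π s) s').toReal * M := this
        _ = M := by rw [← Finset.sum_mul, sum_pmf_toReal, one_mul]
    nlinarith [mul_le_mul_of_nonneg_left h3 hγ0]
  have hMle : M ≤ γ * M := Finset.sup'_le _ _ (fun s _ => key s)
  have hM0 : M ≤ 0 := by nlinarith
  intro s
  linarith [hle s, hM0]
end
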